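/- arXiv:2305.16441 — 2 statements merged into one kernel-verified Lean document; each statement's English description precedes it below -/
import Mathlib

section
/- Let R be a commutative ring, J ⊆ R an ideal, and consider the polynomial ring R[z₁,…,z_k] with 𝔪 = (z₁,…,z_k). Then (J² + 𝔪) ∩ (J + 𝔪²) = J² + J·𝔪 + 𝔪² as ideals of R[z₁,…,z_k], where J denotes the extension of J to R[z₁,…,z_k]. -/
/-!
Both sides contain `J² + J𝔪 + 𝔪²`. Conversely, since `J² ≤ J + 𝔪²` and `𝔪² ≤ 𝔪`, the modular law
reduces the intersection to `J² + 𝔪² + (J ⊓ 𝔪)`, and `J ⊓ 𝔪 = J𝔪` because a polynomial with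
coefficients in `J` and no constant term is a sum of terms `C a * monomial m 1` with `a ∈ J`, `m ≠ 0`.
-/

namespace MvPolynomial

variable {σ R : Type*}

theorem monomial_one_mem_idealOfVars [CommSemiring R] {m : σ →₀ ℕ} (hm : m ≠ 0) :
    monomial m (1 : R) ∈ idealOfVars σ R := by
  rw [← pow_one (idealOfVars σ R), mem_pow_idealOfVars_iff]
  intro x hx
  rw [Finset.mem_singleton.mp (support_monomial_subset hx), Nat.one_le_iff_ne_zero, Ne,
    Finsupp.degree_eq_zero_iff]
  exact hm

theorem map_C_inf_idealOfVars_le_mul [CommRing R] (J : Ideal R) :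
    J.map (C : R →+* MvPolynomial σ R) ⊓ idealOfVars σ R ≤
      J.map (C : R →+* MvPolynomial σ R) * idealOfVars σ R := by
  classical
  rintro p ⟨hpJ, hpm⟩
  rw [SetLike.mem_coe, mem_map_C_iff] at hpJ
  rw [SetLike.mem_coe, ← pow_one (idealOfVars σ R), mem_pow_idealOfVars_iff] at hpm
  rw [← p.support_sum_monomial_coeff]
  refine Ideal.sum_mem _ fun m hm => ?_
  rw [← mul_one (p.coeff m), ← C_mul_monomial]
  refine Ideal.mul_mem_mul (Ideal.mem_map_of_mem _ (hpJ m)) (monomial_one_mem_idealOfVars ?_)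
  rintro rfl
  simpa using hpm 0 hm

end MvPolynomial

namespace Ideal

variable {A : Type*} [CommRing A]

theorem sq_add_inf_add_sq_of_inf_le_mul {I M : Ideal A} (h : I ⊓ M ≤ I * M) :
    (I ^ 2 + M) ⊓ (I + M ^ 2) = I ^ 2 + I * M + M ^ 2 := by
  have hI : I ^ 2 ≤ I + M ^ 2 := le_sup_of_le_left (pow_le_self two_ne_zero)
  have hM : M ^ 2 ≤ M := pow_le_self two_ne_zero
  refine le_antisymm ?_ ?_
  · calc (I ^ 2 + M) ⊓ (I + M ^ 2) = I ^ 2 ⊔ M ⊓ (I + M ^ 2) := sup_inf_assoc_of_le M hI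
      _ = I ^ 2 ⊔ (M ^ 2 ⊔ I ⊓ M) := by
        rw [add_comm I, Submodule.add_eq_sup, inf_comm M, sup_inf_assoc_of_le I hM]
      _ ≤ I ^ 2 + I * M + M ^ 2 :=
        sup_le (le_sup_of_le_left le_sup_left)
          (sup_le le_sup_right (le_sup_of_le_left (le_sup_of_le_right h)))
  · refine sup_le (sup_le ?_ ?_) ?_
    · exact le_inf le_sup_left hI
    · exact le_inf (le_sup_of_le_right mul_le_right) (le_sup_of_le_left mul_le_left)
    · exact le_inf (le_sup_of_le_right hM) le_sup_right

end Ideal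

/-- For a commutative ring `R`, an ideal `J ⊆ R` extended to `R[z₁,…,z_k]`,
and `𝔪 = (z₁,…,z_k)`, one has `(J² + 𝔪) ∩ (J + 𝔪²) = J² + J·𝔪 + 𝔪²`. -/
theorem stmt7 (R : Type*) [CommRing R] (k : ℕ) (J : Ideal R) :
    ((Ideal.map (MvPolynomial.C : R →+* MvPolynomial (Fin k) R) J) ^ 2 +
        Ideal.span (Set.range (MvPolynomial.X : Fin k → MvPolynomial (Fin k) R))) ⊓
      ((Ideal.map (MvPolynomial.C : R →+* MvPolynomial (Fin k) R) J) +
        (Ideal.span (Set.range (MvPolynomial.X : Fin k → MvPolynomial (Fin k) R))) ^ 2) =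
    (Ideal.map (MvPolynomial.C : R →+* MvPolynomial (Fin k) R) J) ^ 2 +
      (Ideal.map (MvPolynomial.C : R →+* MvPolynomial (Fin k) R) J) *
        Ideal.span (Set.range (MvPolynomial.X : Fin k → MvPolynomial (Fin k) R)) +
      (Ideal.span (Set.range (MvPolynomial.X : Fin k → MvPolynomial (Fin k) R))) ^ 2 :=
  Ideal.sq_add_inf_add_sq_of_inf_le_mul (MvPolynomial.map_C_inf_idealOfVars_le_mul J)
end

section
/- Let V be a complex vector bundle of rank r over a compact topological space, given by transition functions φ_{ij} on a finite open cover. If L is a topological (or smooth) complex line bundle given by transition functions Φ_{ij} : V_{ij} → ℂ* with cocycle defect δ_{ijk} := Φ_{jk}Φ_{ik}^{-1}Φ_{ij} satisfying |δ_{ijk} − 1| < 1 everywhere, and {h_k} is a partition of unity subordinate to the cover, then Ψ_{ij} := exp(−Σ_k h_k log δ_{kij})·Φ_{ij} satisfies the exact cocycle condition Ψ_{jk}Ψ_{ik}^{-1}Ψ_{ij} = 1 on all triple overlaps, where log is the principal branch. -/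
/-- The cocycle defect `δ_{ijk} = Φ_{jk}·Φ_{ik}⁻¹·Φ_{ij}`. -/
noncomputable def cocycleDefect {X ι : Type*} (Φ : ι → ι → X → ℂ) (i j k : ι) (x : X) : ℂ :=
  Φ j k x * (Φ i k x)⁻¹ * Φ i j x

/-- The corrected transition functions
`Ψ_{ij} = exp(−Σ_l h_l log δ_{lij})·Φ_{ij}` (principal branch of `log`). -/
noncomputable def correctedTransition {X ι : Type*} [Fintype ι]
    (h : ι → X → ℝ) (Φ : ι → ι → X → ℂ) (i j : ι) (x : X) : ℂ :=
  Complex.exp (-(∑ l, (h l x : ℂ) * Complex.log (cocycleDefect Φ l i j x))) * Φ i j x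

/-!
On a triple overlap, `δ_{ijk} = δ_{ljk} δ_{lik}⁻¹ δ_{lij}` for every `l` whose chart contains the
point (the 2-cocycle identity). All these numbers lie in the right half-plane, so their arguments
are below `π/2` in absolute value and the principal logarithm turns this product into a sum:
`log δ_{ijk} = log δ_{ljk} - log δ_{lik} + log δ_{lij}`. Averaging over `l` with the partition of
unity shows that `log δ_{ijk}` is the Čech coboundary of `η_{ij} = Σ_l h_l log δ_{lij}`, and
multiplying `Φ` by `exp(-η)` removes the defect exactly.
-/

open Complex

namespace Complex

lemma re_pos_of_norm_sub_one_lt {z : ℂ} (hz : ‖z - 1‖ < 1) : 0 < z.re := by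
  have h := (abs_re_le_norm (z - 1)).trans_lt hz
  rw [sub_re, one_re] at h
  linarith [(abs_lt.mp h).1]

lemma eq_log_of_exp_eq {s z : ℂ} (hs : exp s = z) (him : |s.im - arg z| < 2 * Real.pi) :
    s = log z := by
  obtain ⟨n, hn⟩ := exp_eq_exp_iff_exists_int.mp (hs.trans (exp_log (hs ▸ exp_ne_zero s)).symm)
  have hn_im : s.im - arg z = n * (2 * Real.pi) := by
    rw [hn]; simp [log_im]
  rw [hn_im, abs_mul, abs_of_pos Real.two_pi_pos] at him
  have hn0 : n = 0 :=
    Int.abs_lt_one_iff.mp (by exact_mod_cast (mul_lt_iff_lt_one_left Real.two_pi_pos).mp him)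
  simpa [hn0] using hn

lemma log_mul_inv_mul_of_re_pos {a b c : ℂ} (ha : 0 < a.re) (hb : 0 < b.re) (hc : 0 < c.re)
    (hd : 0 < (a * b⁻¹ * c).re) :
    log (a * b⁻¹ * c) = log a - log b + log c := by
  have harg {z : ℂ} (hz : 0 < z.re) : |arg z| < Real.pi / 2 :=
    abs_arg_lt_pi_div_two_iff.mpr (Or.inl hz)
  refine (eq_log_of_exp_eq ?_ ?_).symm
  · rw [exp_add, exp_sub, exp_log (ne_zero_of_re_pos ha), exp_log (ne_zero_of_re_pos hb),
    exp_log (ne_zero_of_re_pos hc), div_eq_mul_inv]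
  · have := abs_lt.mp (harg ha); have := abs_lt.mp (harg hb)
    have := abs_lt.mp (harg hc); have := abs_lt.mp (harg hd)
    simp only [add_im, sub_im, log_im]
    exact abs_lt.mpr ⟨by linarith, by linarith⟩

end Complex

lemma mul_inv_mul_eq_of_mul_inv_mul_inv_eq_one {G₀ : Type*} [CommGroupWithZero G₀]
    {a b c d : G₀} (hb : b ≠ 0) (h : d * a⁻¹ * b * c⁻¹ = 1) : a * b⁻¹ * c = d := by
  have ha : a ≠ 0 := by rintro rfl; simp at h
  have hc : c ≠ 0 := by rintro rfl; simp at h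
  field_simp at h ⊢
  exact h.symm

lemma Finset.sum_ofReal_mul_eq_of_sum_eq_one {ι : Type*} [Fintype ι] {w : ι → ℝ} {f : ι → ℂ}
    {c : ℂ} (hw : ∑ l, w l = 1) (hf : ∀ l, w l ≠ 0 → f l = c) :
    ∑ l, (w l : ℂ) * f l = c := by
  have hterm (l : ι) : (w l : ℂ) * f l = w l * c := by
    by_cases hl : w l = 0
    · simp [hl]
    · rw [hf l hl]
  rw [Finset.sum_congr rfl fun l _ => hterm l, ← Finset.sum_mul, ← ofReal_sum, hw, ofReal_one,
    one_mul]

section CorrectedTransition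

variable {X ι : Type*} [Fintype ι] (h : ι → X → ℝ) (Φ : ι → ι → X → ℂ)

noncomputable def correctionExponent (i j : ι) (x : X) : ℂ :=
  ∑ l, (h l x : ℂ) * log (cocycleDefect Φ l i j x)

lemma correctedTransition_eq (i j : ι) (x : X) :
    correctedTransition h Φ i j x = exp (-correctionExponent h Φ i j x) * Φ i j x :=
  rfl

lemma cocycleDefect_correctedTransition (i j k : ι) (x : X) :
    cocycleDefect (correctedTransition h Φ) i j k x =
      exp (-(correctionExponent h Φ j k x - correctionExponent h Φ i k x +
        correctionExponent h Φ i j x)) * cocycleDefect Φ i j k x := by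
  simp only [cocycleDefect, correctedTransition_eq, neg_add, neg_sub, exp_add, exp_sub, exp_neg]
  field_simp

end CorrectedTransition

lemma log_cocycleDefect_eq_of_mem {X ι : Type*} {V : ι → Set X} {Φ : ι → ι → X → ℂ}
    (hsmall : ∀ i j k, ∀ x ∈ V i ∩ V j ∩ V k, ‖cocycleDefect Φ i j k x - 1‖ < 1)
    (hcoc : ∀ i j k l, ∀ x ∈ V i ∩ V j ∩ V k ∩ V l,
      cocycleDefect Φ j k l x * (cocycleDefect Φ i k l x)⁻¹ *
        cocycleDefect Φ i j l x * (cocycleDefect Φ i j k x)⁻¹ = 1)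
    {l i j k : ι} {x : X} (hl : x ∈ V l) (hi : x ∈ V i) (hj : x ∈ V j) (hk : x ∈ V k) :
    log (cocycleDefect Φ l j k x) - log (cocycleDefect Φ l i k x) +
      log (cocycleDefect Φ l i j x) = log (cocycleDefect Φ i j k x) := by
  have hre {a b c : ι} (ha : x ∈ V a) (hb : x ∈ V b) (hc : x ∈ V c) :
      0 < (cocycleDefect Φ a b c x).re :=
    re_pos_of_norm_sub_one_lt (hsmall a b c x ⟨⟨ha, hb⟩, hc⟩)
  have hprod := mul_inv_mul_eq_of_mul_inv_mul_inv_eq_one (ne_zero_of_re_pos (hre hl hi hk))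
    (hcoc l i j k x ⟨⟨⟨hl, hi⟩, hj⟩, hk⟩)
  rw [← hprod, log_mul_inv_mul_of_re_pos (hre hl hj hk) (hre hl hi hk) (hre hl hi hj)
    (hprod ▸ hre hi hj hk)]

theorem stmt17_general (X : Type*) [TopologicalSpace X] (ι : Type*) [Fintype ι]
    (V : ι → Set X)
    (Φ : ι → ι → X → ℂ)
    (hsmall : ∀ i j k, ∀ x ∈ V i ∩ V j ∩ V k,
      ‖cocycleDefect Φ i j k x - 1‖ < 1)
    (hcoc : ∀ i j k l, ∀ x ∈ V i ∩ V j ∩ V k ∩ V l,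
      cocycleDefect Φ j k l x * (cocycleDefect Φ i k l x)⁻¹ *
        cocycleDefect Φ i j l x * (cocycleDefect Φ i j k x)⁻¹ = 1)
    (h : ι → X → ℝ)
    (hsupp : ∀ k x, x ∉ V k → h k x = 0)
    (hsum : ∀ x, ∑ k, h k x = 1) :
    ∀ i j k, ∀ x ∈ V i ∩ V j ∩ V k,
      correctedTransition h Φ j k x * (correctedTransition h Φ i k x)⁻¹ *
        correctedTransition h Φ i j x = 1 := by
  rintro i j k x ⟨⟨hi, hj⟩, hk⟩
  have hη : correctionExponent h Φ j k x - correctionExponent h Φ i k x +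
      correctionExponent h Φ i j x = log (cocycleDefect Φ i j k x) := by
    simp only [correctionExponent, ← Finset.sum_sub_distrib, ← Finset.sum_add_distrib, ← mul_sub,
      ← mul_add]
    refine Finset.sum_ofReal_mul_eq_of_sum_eq_one (hsum x) fun l hl => ?_
    exact log_cocycleDefect_eq_of_mem hsmall hcoc (not_not.mp (mt (hsupp l x) hl)) hi hj hk
  have hδ : cocycleDefect Φ i j k x ≠ 0 :=
    ne_zero_of_re_pos (re_pos_of_norm_sub_one_lt (hsmall i j k x ⟨⟨hi, hj⟩, hk⟩))
  change cocycleDefect (correctedTransition h Φ) i j k x = 1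
  rw [cocycleDefect_correctedTransition, hη, exp_neg, exp_log hδ, inv_mul_cancel₀ hδ]

/-- Given transition functions `Φ_{ij}` on a finite open cover whose cocycle
defect `δ_{ijk}` satisfies `|δ_{ijk} − 1| < 1` and the 2-cocycle identity, and a partition
of unity `{h_k}` subordinate to the cover, the corrected transition functions
`Ψ_{ij} = exp(−Σ_k h_k log δ_{kij})·Φ_{ij}` satisfy the exact cocycle condition
`Ψ_{jk}·Ψ_{ik}⁻¹·Ψ_{ij} = 1` on all triple overlaps. -/
theorem stmt17 (X : Type*) [TopologicalSpace X] (ι : Type*) [Fintype ι]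
    (V : ι → Set X) (hopen : ∀ i, IsOpen (V i)) (hcov : ∀ x, ∃ i, x ∈ V i)
    (Φ : ι → ι → X → ℂ)
    (hcont : ∀ i j, ContinuousOn (Φ i j) (V i ∩ V j))
    (hne : ∀ i j, ∀ x ∈ V i ∩ V j, Φ i j x ≠ 0)
    (hinvsym : ∀ i j, ∀ x ∈ V i ∩ V j, Φ j i x = (Φ i j x)⁻¹)
    (hsmall : ∀ i j k, ∀ x ∈ V i ∩ V j ∩ V k,
      ‖cocycleDefect Φ i j k x - 1‖ < 1)
    (hcoc : ∀ i j k l, ∀ x ∈ V i ∩ V j ∩ V k ∩ V l,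
      cocycleDefect Φ j k l x * (cocycleDefect Φ i k l x)⁻¹ *
        cocycleDefect Φ i j l x * (cocycleDefect Φ i j k x)⁻¹ = 1)
    (h : ι → X → ℝ)
    (hnonneg : ∀ k x, 0 ≤ h k x)
    (hsupp : ∀ k x, x ∉ V k → h k x = 0)
    (hsum : ∀ x, ∑ k, h k x = 1) :
    ∀ i j k, ∀ x ∈ V i ∩ V j ∩ V k,
      correctedTransition h Φ j k x * (correctedTransition h Φ i k x)⁻¹ *
        correctedTransition h Φ i j x = 1 :=
  stmt17_general X ι V Φ hsmall hcoc h hsupp hsum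
end
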